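/- Let w ∈ S_n be a minimal crowded permutation, with first (smallest) descent d and last (largest) descent d'. Then w(i) = i for all i ∈ [1, d−1] ∪ [d'+2, n]. -/

import Mathlib

/-- The value in position `j` (0-indexed) of the one-line notation of `w`,
extended by the identity outside the range `[0, n)`. -/
def entry {n : ℕ} (w : Equiv.Perm (Fin n)) (j : ℕ) : ℕ :=
  if h : j < n then (w ⟨j, h⟩ : ℕ) else j

/-- One-line notation of a permutation, as a list of natural numbers (0-indexed values). -/
def oneLine {n : ℕ} (w : Equiv.Perm (Fin n)) : List ℕ :=
  List.ofFn (fun i => (w i : ℕ))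

/-- A permutation is fully commutative iff it avoids the pattern 321. -/
def FullyCommutative {n : ℕ} (w : Equiv.Perm (Fin n)) : Prop :=
  ¬ ∃ i j k : Fin n, i < j ∧ j < k ∧ w k < w j ∧ w j < w i

/-- A permutation is boolean iff it avoids the patterns 321 and 3412. -/
def BooleanPerm {n : ℕ} (w : Equiv.Perm (Fin n)) : Prop :=
  FullyCommutative w ∧
    ¬ ∃ i j k l : Fin n, i < j ∧ j < k ∧ k < l ∧
        w k < w l ∧ w l < w i ∧ w i < w j

/-- The Coxeter length of a permutation: its number of inversions. -/
def invCount {n : ℕ} (w : Equiv.Perm (Fin n)) : ℕ :=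
  (Finset.univ.filter fun p : Fin n × Fin n => p.1 < p.2 ∧ w p.2 < w p.1).card

/-- The support of `w`: the set of (0-indexed) indices `i` such that the simple
transposition `s_i` appears in some (equivalently, every) reduced word of `w`;
equivalently, `{w(0),…,w(i)} ≠ {0,…,i}`, i.e. `max {w(j) : j ≤ i} > i`. -/
def Supp {n : ℕ} (w : Equiv.Perm (Fin n)) : Set ℕ :=
  {i | ∃ j : Fin n, (j : ℕ) ≤ i ∧ i < (w j : ℕ)}

/-- The simple transposition `s_i`, swapping positions `i` and `i+1` (0-indexed). -/
def simpleTr {n : ℕ} (i : ℕ) (h : i + 1 < n) : Equiv.Perm (Fin n) :=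
  Equiv.swap ⟨i, by omega⟩ ⟨i + 1, h⟩

/-- Schensted row insertion of a value into a tableau (a list of rows). -/
def rowInsert : List (List ℕ) → ℕ → List (List ℕ)
  | [], x => [[x]]
  | r :: rest, x =>
    match r.find? (fun y => decide (x < y)) with
    | none => (r ++ [x]) :: rest
    | some y => (r.map fun z => if z = y then x else z) :: rowInsert rest y

/-- RSK insertion tableau of a list. -/
def RSKList (l : List ℕ) : List (List ℕ) := l.foldl rowInsert []

/-- RSK insertion tableau `P(w)` of a permutation. -/
def RSKP {n : ℕ} (w : Equiv.Perm (Fin n)) : List (List ℕ) := RSKList (oneLine w)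

/-- RSK recording tableau `Q(w) = P(w⁻¹)`. -/
def RSKQ {n : ℕ} (w : Equiv.Perm (Fin n)) : List (List ℕ) := RSKP w⁻¹

/-- The set of entries in the first row of a tableau. -/
def Row1 (T : List (List ℕ)) : Finset ℕ := (T.getD 0 []).toFinset

/-- The set of entries in the second row of a tableau. -/
def Row2 (T : List (List ℕ)) : Finset ℕ := (T.getD 1 []).toFinset

/-- `BumpsAt l k z` : during the RSK insertion of the list `l`, the insertion of
the `(k+1)`-st letter of `l` bumps the value `z` from the first row to the
second row (`z` is the smallest first-row entry larger than the inserted letter). -/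
def BumpsAt (l : List ℕ) (k : ℕ) (z : ℕ) : Prop :=
  k < l.length ∧
    ((RSKList (l.take k)).getD 0 []).find? (fun y => decide (l.getD k 0 < y)) = some z

/-- `Bumps l b z` : during the RSK insertion of `l`, the value `b` bumps the
value `z` from the first row to the second row. -/
def Bumps (l : List ℕ) (b z : ℕ) : Prop :=
  ∃ k, l.getD k 0 = b ∧ BumpsAt l k z

/-- A finite set of naturals is crowded if some integer interval `[y, y+2x]`
(with `x > 0`) contains more than `x+1` of its elements. -/
def CrowdedSet (L : Finset ℕ) : Prop :=
  ∃ x y : ℤ, 0 < x ∧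
    x + 1 < ((L.filter fun a : ℕ => y ≤ (a : ℤ) ∧ (a : ℤ) ≤ y + 2 * x).card : ℤ)

/-- A fully commutative permutation is crowded if the second row of its RSK
insertion tableau is a crowded set. -/
def CrowdedPerm {n : ℕ} (w : Equiv.Perm (Fin n)) : Prop :=
  CrowdedSet (Row2 (RSKP w))

/-- Covering relation of the right weak order. -/
def RWCovers {n : ℕ} (u v : Equiv.Perm (Fin n)) : Prop :=
  ∃ i, ∃ h : i + 1 < n, v = u * simpleTr i h ∧ invCount v = invCount u + 1

/-- The right weak order on `S_n`. -/
def RightWeakLE {n : ℕ} : Equiv.Perm (Fin n) → Equiv.Perm (Fin n) → Prop :=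
  Relation.ReflTransGen RWCovers

/-- Covering relation of the left weak order. -/
def LWCovers {n : ℕ} (u v : Equiv.Perm (Fin n)) : Prop :=
  ∃ i, ∃ h : i + 1 < n, v = simpleTr i h * u ∧ invCount v = invCount u + 1

/-- The left weak order on `S_n`. -/
def LeftWeakLE {n : ℕ} : Equiv.Perm (Fin n) → Equiv.Perm (Fin n) → Prop :=
  Relation.ReflTransGen LWCovers

/-- A minimal crowded permutation: a crowded fully commutative permutation all of
whose strict predecessors (among fully commutative permutations) in the right
weak order are uncrowded. -/
def MinimalCrowded {n : ℕ} (w : Equiv.Perm (Fin n)) : Prop :=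
  FullyCommutative w ∧ CrowdedPerm w ∧
    ∀ v : Equiv.Perm (Fin n), FullyCommutative v → RightWeakLE v w → v ≠ w →
      ¬ CrowdedPerm v

/-- `l` is an increasing subsequence of the one-line notation of `w`. -/
def IncreasingSubseq {n : ℕ} (w : Equiv.Perm (Fin n)) (l : List ℕ) : Prop :=
  l.Sublist (oneLine w) ∧ l.Pairwise (· < ·)

/-- The length of a longest increasing subsequence of `w`. -/
noncomputable def lisLen {n : ℕ} (w : Equiv.Perm (Fin n)) : ℕ :=
  sSup {k | ∃ l : List ℕ, IncreasingSubseq w l ∧ l.length = k}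

/-- A consecutive occurrence of the pattern 415263 starting at (0-indexed) position `i`. -/
def Consec415263 {n : ℕ} (w : Equiv.Perm (Fin n)) (i : ℕ) : Prop :=
  i + 5 < n ∧
    entry w (i + 1) < entry w (i + 3) ∧ entry w (i + 3) < entry w (i + 5) ∧
    entry w (i + 5) < entry w i ∧ entry w i < entry w (i + 2) ∧
    entry w (i + 2) < entry w (i + 4)

/-- A consecutive occurrence of the pattern 315264 starting at (0-indexed) position `i`. -/
def Consec315264 {n : ℕ} (w : Equiv.Perm (Fin n)) (i : ℕ) : Prop :=
  i + 5 < n ∧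
    entry w (i + 1) < entry w (i + 3) ∧ entry w (i + 3) < entry w i ∧
    entry w i < entry w (i + 5) ∧ entry w (i + 5) < entry w (i + 2) ∧
    entry w (i + 2) < entry w (i + 4)

/-- An occurrence (not necessarily consecutive) of the pattern 415263 in `w`,
at positions `p 0 < p 1 < ⋯ < p 5`. -/
def Occ415263 {n : ℕ} (w : Equiv.Perm (Fin n)) (p : Fin 6 → Fin n) : Prop :=
  StrictMono p ∧
    w (p 1) < w (p 3) ∧ w (p 3) < w (p 5) ∧ w (p 5) < w (p 0) ∧
    w (p 0) < w (p 2) ∧ w (p 2) < w (p 4)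

/-! If a descent of `w` sits inside a consecutive 231 or 312 pattern, the Knuth move that sorts
it gives `v = w s_j`, covered by `w` in the right weak order, still fully commutative, and with
`P(v) = P(w)`; so `v` is crowded, contradicting minimality. (Full commutativity makes the larger
of the two swapped letters exceed every earlier letter, which is what keeps the two row
insertions in step.) Hence a minimal crowded permutation has no consecutive 231, 312 or 321.
If `i < d` were the first non-fixed point, the value `i` would sit at a position `p ≥ i + 2`
after two larger values, a 231 or 321 ending at `p`; symmetrically, if `i ≥ d' + 2` were the
last one, the value `i` would sit at a position `q ≤ d'` before two smaller values, a 312 or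
321 starting at `q`. -/

theorem rskList_append (l m : List ℕ) : RSKList (l ++ m) = m.foldl rowInsert (RSKList l) :=
  List.foldl_append

theorem mem_row1_rowInsert (T : List (List ℕ)) (x : ℕ) : x ∈ Row1 (rowInsert T x) := by
  cases T with
  | nil => simp [rowInsert, Row1]
  | cons r rest =>
    simp only [rowInsert, Row1]
    cases hf : r.find? (fun y => decide (x < y)) with
    | none => simp
    | some z => simpa using ⟨z, List.mem_of_find?_eq_some hf, by simp⟩

theorem eq_or_mem_row1_of_mem_rowInsert {T : List (List ℕ)} {x y : ℕ}
    (hy : y ∈ Row1 (rowInsert T x)) :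
    y = x ∨ y ∈ Row1 T := by
  cases T with
  | nil => simpa [rowInsert, Row1] using hy
  | cons r rest =>
    simp only [rowInsert, Row1] at hy ⊢
    cases hf : r.find? (fun y => decide (x < y)) with
    | none => simp_all
    | some z =>
      simp only [hf, List.getD_cons_zero, List.mem_toFinset, List.mem_map] at hy
      obtain ⟨a, ha, rfl⟩ := hy
      by_cases haz : a = z <;> simp_all

theorem mem_of_mem_row1_rskList {l : List ℕ} {y : ℕ} (hy : y ∈ Row1 (RSKList l)) :
    y ∈ l := by
  induction l using List.reverseRecOn with
  | nil => simp [RSKList, Row1] at hy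
  | append_singleton l x ih =>
    rw [rskList_append, List.foldl_cons, List.foldl_nil] at hy
    rcases eq_or_mem_row1_of_mem_rowInsert hy with rfl | h
    · simp
    · simp [ih h]

theorem find?_lt_eq_none {r : List ℕ} {x : ℕ} (h : ∀ a ∈ r, a ≤ x) :
    r.find? (fun y => decide (x < y)) = none :=
  List.find?_eq_none.mpr fun a ha => by simpa using h a ha

-- `z` is appended to the first row in either order, and `x` bumps the same entry.
theorem rowInsert_comm_of_lt {T : List (List ℕ)} {x z : ℕ} (hz : ∀ a ∈ Row1 T, a < z)
    (hx : ∃ a ∈ Row1 T, x < a) :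
    rowInsert (rowInsert T z) x = rowInsert (rowInsert T x) z := by
  obtain ⟨a, ha, hxa⟩ := hx
  cases T with
  | nil => simp [Row1] at ha
  | cons r rest =>
    simp only [Row1, List.getD_cons_zero, List.mem_toFinset] at hz ha
    obtain ⟨y, hy⟩ : ∃ y, r.find? (fun y => decide (x < y)) = some y :=
      Option.isSome_iff_exists.mp (List.find?_isSome.mpr ⟨a, ha, by simpa using hxa⟩)
    have hyr : y ∈ r := List.mem_of_find?_eq_some hy
    have hxy : x < y := by simpa using List.find?_some hy
    have hyz : y < z := hz y hyr
    have hmap : ∀ b ∈ r.map (fun b => if b = y then x else b), b ≤ z := by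
      simp only [List.mem_map]
      rintro _ ⟨b, hb, rfl⟩
      split_ifs <;> linarith [hz b hb]
    simp [rowInsert, find?_lt_eq_none (fun b hb => (hz b hb).le), List.find?_append, hy,
      find?_lt_eq_none hmap, hyz.ne']

-- In either order `z` is bumped into the second row and the first row gains `x` and `y`.
theorem rowInsert_knuth_zxy_of_le {T : List (List ℕ)} {x y z : ℕ}
    (hT : ∀ a ∈ Row1 T, a ≤ x) (hxy : x < y) (hyz : y < z) :
    rowInsert (rowInsert (rowInsert T z) x) y = rowInsert (rowInsert (rowInsert T x) z) y := by
  cases T with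
  | nil =>
    simp [rowInsert, hyz, hxy.trans hyz, hxy.not_gt, (hxy.trans hyz).not_gt, (hxy.trans hyz).ne]
  | cons r rest =>
    simp only [Row1, List.getD_cons_zero, List.mem_toFinset] at hT
    have hr : ∀ {b}, x ≤ b → r.find? (fun a => decide (b < a)) = none :=
      fun hb => find?_lt_eq_none fun a ha => (hT a ha).trans hb
    have hrz : ∀ c, r.map (fun a => if a = z then c else a) = r := fun c =>
      (List.map_congr_left fun a ha => if_neg (by linarith [hT a ha])).trans (List.map_id r)
    simp [rowInsert, hr le_rfl, hr (hxy.trans hyz).le, hr hxy.le, List.find?_append, hrz, hyz,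
      hxy.trans hyz, (hxy.trans hyz).not_gt, hxy.not_gt, (hxy.trans hyz).ne]

theorem rowInsert_knuth_zxy {T : List (List ℕ)} {x y z : ℕ} (hT : ∀ a ∈ Row1 T, a < z)
    (hxy : x < y) (hyz : y < z) :
    rowInsert (rowInsert (rowInsert T z) x) y = rowInsert (rowInsert (rowInsert T x) z) y := by
  by_cases hx : ∃ a ∈ Row1 T, x < a
  · rw [rowInsert_comm_of_lt hT hx]
  · push Not at hx
    exact rowInsert_knuth_zxy_of_le hx hxy hyz

theorem rowInsert_knuth_yzx {T : List (List ℕ)} {x y z : ℕ} (hT : ∀ a ∈ Row1 T, a < z)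
    (hxy : x < y) (hyz : y < z) :
    rowInsert (rowInsert (rowInsert T y) z) x = rowInsert (rowInsert (rowInsert T y) x) z := by
  refine rowInsert_comm_of_lt (fun a ha => ?_) ⟨y, mem_row1_rowInsert T y, hxy⟩
  rcases eq_or_mem_row1_of_mem_rowInsert ha with rfl | ha
  exacts [hyz, hT a ha]

theorem rskList_knuth_zxy {A S : List ℕ} {x y z : ℕ} (hA : ∀ a ∈ A, a < z)
    (hxy : x < y) (hyz : y < z) :
    RSKList (A ++ z :: x :: y :: S) = RSKList (A ++ x :: z :: y :: S) := by
  simp only [rskList_append, List.foldl_cons]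
  rw [rowInsert_knuth_zxy (fun a ha => hA a (mem_of_mem_row1_rskList ha)) hxy hyz]

theorem rskList_knuth_yzx {A S : List ℕ} {x y z : ℕ} (hA : ∀ a ∈ A, a < z)
    (hxy : x < y) (hyz : y < z) :
    RSKList (A ++ y :: z :: x :: S) = RSKList (A ++ y :: x :: z :: S) := by
  simp only [rskList_append, List.foldl_cons]
  rw [rowInsert_knuth_yzx (fun a ha => hA a (mem_of_mem_row1_rskList ha)) hxy hyz]

def inversions {n : ℕ} (u : Equiv.Perm (Fin n)) : Finset (Fin n × Fin n) :=
  Finset.univ.filter fun p => p.1 < p.2 ∧ u p.2 < u p.1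

theorem invCount_eq_card_inversions {n : ℕ} (u : Equiv.Perm (Fin n)) :
    invCount u = (inversions u).card :=
  rfl

section SimpleTransposition

variable {n j : ℕ} (h : j + 1 < n)

theorem coe_simpleTr_apply (p : Fin n) :
    ((simpleTr j h p : Fin n) : ℕ) =
      if (p : ℕ) = j then j + 1 else if (p : ℕ) = j + 1 then j else p := by
  simp only [simpleTr, Equiv.swap_apply_def, Fin.ext_iff]
  split_ifs <;> rfl

@[simp]
theorem simpleTr_mul_self : simpleTr j h * simpleTr j h = 1 := Equiv.swap_mul_self _ _

theorem simpleTr_lt_simpleTr {p q : Fin n} (hpq : p < q)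
    (hne : ¬((p : ℕ) = j ∧ (q : ℕ) = j + 1)) :
    simpleTr j h p < simpleTr j h q := by
  rw [Fin.lt_def] at hpq ⊢
  rw [coe_simpleTr_apply, coe_simpleTr_apply]
  split_ifs <;> omega

variable {h}

theorem FullyCommutative.mul_simpleTr {w : Equiv.Perm (Fin n)} (hw : FullyCommutative w)
    (hdesc : w ⟨j + 1, h⟩ < w ⟨j, by omega⟩) : FullyCommutative (w * simpleTr j h) := by
  rintro ⟨a, b, c, hab, hbc, hcb, hba⟩
  simp only [Equiv.Perm.mul_apply] at hcb hba
  by_cases hab' : (a : ℕ) = j ∧ (b : ℕ) = j + 1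
  · rw [show a = ⟨j, j.lt_of_succ_lt h⟩ from Fin.ext hab'.1,
      show b = ⟨j + 1, h⟩ from Fin.ext hab'.2] at hba
    simp only [simpleTr, Equiv.swap_apply_left, Equiv.swap_apply_right] at hba
    exact hba.not_gt hdesc
  by_cases hbc' : (b : ℕ) = j ∧ (c : ℕ) = j + 1
  · rw [show b = ⟨j, j.lt_of_succ_lt h⟩ from Fin.ext hbc'.1,
      show c = ⟨j + 1, h⟩ from Fin.ext hbc'.2] at hcb
    simp only [simpleTr, Equiv.swap_apply_left, Equiv.swap_apply_right] at hcb
    exact hcb.not_gt hdesc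
  exact hw ⟨_, _, _, simpleTr_lt_simpleTr h hab hab', simpleTr_lt_simpleTr h hbc hbc', hcb, hba⟩

theorem inversions_mul_simpleTr {u : Equiv.Perm (Fin n)}
    (hasc : u ⟨j, by omega⟩ < u ⟨j + 1, h⟩) :
    inversions (u * simpleTr j h) = insert (⟨j, by omega⟩, ⟨j + 1, h⟩)
      ((inversions u).map ((simpleTr j h).prodCongr (simpleTr j h)).toEmbedding) := by
  set s := simpleTr j h
  ext ⟨p, q⟩
  simp only [inversions, Finset.mem_insert, Finset.mem_map_equiv, Finset.mem_filter_univ]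
  simp only [Equiv.prodCongr_symm, Equiv.prodCongr_apply, Prod.map, Prod.mk.injEq,
    Equiv.Perm.mul_apply, show s.symm = s from Equiv.symm_swap _ _]
  constructor
  · rintro ⟨hpq, hlt⟩
    by_cases hJ : (p : ℕ) = j ∧ (q : ℕ) = j + 1
    · exact Or.inl ⟨Fin.ext hJ.1, Fin.ext hJ.2⟩
    · exact Or.inr ⟨simpleTr_lt_simpleTr h hpq hJ, hlt⟩
  · rintro (⟨rfl, rfl⟩ | ⟨hpq, hlt⟩)
    · exact ⟨Fin.mk_lt_mk.mpr j.lt_succ_self, by simpa [s, simpleTr] using hasc⟩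
    refine ⟨?_, hlt⟩
    by_cases hJ : (s p : ℕ) = j ∧ (s q : ℕ) = j + 1
    · rw [show s p = ⟨j, j.lt_of_succ_lt h⟩ from Fin.ext hJ.1,
        show s q = ⟨j + 1, h⟩ from Fin.ext hJ.2] at hlt
      exact absurd hasc hlt.asymm
    · simpa [s, simpleTr] using simpleTr_lt_simpleTr h hpq hJ

theorem invCount_mul_simpleTr {u : Equiv.Perm (Fin n)}
    (hasc : u ⟨j, by omega⟩ < u ⟨j + 1, h⟩) :
    invCount (u * simpleTr j h) = invCount u + 1 := by
  rw [invCount_eq_card_inversions, inversions_mul_simpleTr hasc, Finset.card_insert_of_notMem,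
    Finset.card_map, invCount_eq_card_inversions]
  simp [inversions, Finset.mem_map_equiv, simpleTr]

end SimpleTransposition

section OneLine

variable {n : ℕ} (w : Equiv.Perm (Fin n))

theorem entry_of_lt {j : ℕ} (h : j < n) : entry w j = w ⟨j, h⟩ := dif_pos h

theorem entry_of_le {j : ℕ} (h : n ≤ j) : entry w j = j := dif_neg h.not_gt

theorem entry_coe (i : Fin n) : entry w i = w i := entry_of_lt w i.isLt

theorem coe_extendDomain_equivSubtype : ⇑(w.extendDomain Fin.equivSubtype) = entry w := by
  ext j
  by_cases h : j < n <;> simp [Equiv.Perm.extendDomain, entry, h]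

theorem entry_injective : Function.Injective (entry w) := by
  rw [← coe_extendDomain_equivSubtype]
  exact Equiv.injective _

variable {w}

theorem lt_of_entry_lt_entry {j k : ℕ} (hjk : j < k) (h : entry w k < entry w j) : k < n := by
  by_contra hk
  have hj : entry w j < k := by
    by_cases hj : j < n
    · rw [entry_of_lt w hj]; omega
    · rw [entry_of_le w (not_lt.mp hj)]; exact hjk
  rw [entry_of_le w (not_lt.mp hk)] at h
  omega

theorem oneLine_length : (oneLine w).length = n := List.length_ofFn

theorem oneLine_getElem (k : ℕ) (hk : k < (oneLine w).length) : (oneLine w)[k] = entry w k := by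
  simp [oneLine, entry, show k < n by simpa [oneLine] using hk]

theorem oneLine_drop {j : ℕ} (hj : j < n) :
    (oneLine w).drop j = entry w j :: (oneLine w).drop (j + 1) := by
  rw [List.drop_eq_getElem_cons (by simpa [oneLine] using hj), oneLine_getElem]

theorem oneLine_take_add_one {j : ℕ} (hj : j < n) :
    (oneLine w).take (j + 1) = (oneLine w).take j ++ [entry w j] := by
  rw [List.take_add_one, List.getElem?_eq_getElem (by rwa [oneLine_length]), oneLine_getElem]
  rfl

theorem exists_entry_eq_of_mem_take_oneLine {j a : ℕ} (ha : a ∈ (oneLine w).take j) :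
    ∃ k < j, entry w k = a := by
  obtain ⟨k, hk, rfl⟩ := List.getElem_of_mem ha
  simp only [List.length_take] at hk
  exact ⟨k, by omega, by rw [List.getElem_take, oneLine_getElem]⟩

theorem oneLine_eq_take_append {i : ℕ} (h : i + 2 < n) :
    oneLine w = (oneLine w).take i ++
      entry w i :: entry w (i + 1) :: entry w (i + 2) :: (oneLine w).drop (i + 3) := by
  conv_lhs => rw [← List.take_append_drop i (oneLine w)]
  rw [oneLine_drop (by omega), oneLine_drop (by omega), oneLine_drop h]

theorem oneLine_mul_simpleTr {j : ℕ} (h : j + 1 < n) :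
    oneLine (w * simpleTr j h) =
      (oneLine w).take j ++ entry w (j + 1) :: entry w j :: (oneLine w).drop (j + 2) := by
  apply List.ext_getElem
  · simp only [List.length_append, List.length_cons, List.length_take, List.length_drop,
      oneLine_length]
    omega
  intro k hk _
  rw [oneLine_getElem]
  have hkn : k < n := by simpa [oneLine] using hk
  rw [entry_of_lt _ hkn, Equiv.Perm.mul_apply, ← entry_coe, coe_simpleTr_apply]
  simp only [List.getElem_append, List.getElem_cons, List.getElem_take, List.getElem_drop,
    oneLine_getElem, List.length_take, oneLine_length]
  split_ifs <;> first | rfl | (congr 1; omega)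

end OneLine

section Knuth

variable {n : ℕ} {w : Equiv.Perm (Fin n)}

theorem FullyCommutative.entry_lt_entry (hw : FullyCommutative w) {i j k : ℕ} (hij : i < j)
    (hjk : j < k) (h : entry w k < entry w j) : entry w i < entry w j := by
  have hk : k < n := lt_of_entry_lt_entry hjk h
  refine (Ne.lt_or_gt ((entry_injective w).ne hij.ne)).resolve_right fun h' => hw ?_
  rw [entry_of_lt w (hjk.trans hk), entry_of_lt w hk] at h
  rw [entry_of_lt w (hij.trans (hjk.trans hk)), entry_of_lt w (hjk.trans hk)] at h'
  exact ⟨_, _, _, Fin.mk_lt_mk.mpr hij, Fin.mk_lt_mk.mpr hjk, h, h'⟩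

theorem FullyCommutative.rskP_mul_simpleTr_of_231 (hw : FullyCommutative w) {i : ℕ}
    (h : i + 2 < n) (hxy : entry w (i + 2) < entry w i) (hyz : entry w i < entry w (i + 1)) :
    RSKP (w * simpleTr (i + 1) h) = RSKP w := by
  have hA : ∀ a ∈ (oneLine w).take i, a < entry w (i + 1) := fun a ha => by
    obtain ⟨k, hk, rfl⟩ := exists_entry_eq_of_mem_take_oneLine ha
    exact hw.entry_lt_entry (by omega) (by omega) (hxy.trans hyz)
  rw [RSKP, RSKP, oneLine_mul_simpleTr, oneLine_take_add_one (by omega), List.append_assoc,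
    List.singleton_append]
  conv_rhs => rw [oneLine_eq_take_append h]
  exact (rskList_knuth_yzx hA hxy hyz).symm

theorem FullyCommutative.rskP_mul_simpleTr_of_312 (hw : FullyCommutative w) {i : ℕ}
    (h : i + 1 < n) (hxy : entry w (i + 1) < entry w (i + 2)) (hyz : entry w (i + 2) < entry w i) :
    RSKP (w * simpleTr i h) = RSKP w := by
  have hA : ∀ a ∈ (oneLine w).take i, a < entry w i := fun a ha => by
    obtain ⟨k, hk, rfl⟩ := exists_entry_eq_of_mem_take_oneLine ha
    exact hw.entry_lt_entry hk (Nat.lt_succ_self i) (hxy.trans hyz)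
  have h2 : i + 2 < n := lt_of_entry_lt_entry (by omega) hyz
  rw [RSKP, RSKP, oneLine_mul_simpleTr, oneLine_drop h2]
  conv_rhs => rw [oneLine_eq_take_append h2]
  exact (rskList_knuth_zxy hA hxy hyz).symm

end Knuth

namespace MinimalCrowded

variable {n : ℕ} {w : Equiv.Perm (Fin n)}

theorem rskP_mul_simpleTr_ne (hmin : MinimalCrowded w) {j : ℕ} (h : j + 1 < n)
    (hdesc : entry w (j + 1) < entry w j) : RSKP (w * simpleTr j h) ≠ RSKP w := by
  obtain ⟨hw, hcrowded, hminimal⟩ := hmin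
  rw [entry_of_lt w h, entry_of_lt w (by omega)] at hdesc
  have hlen : invCount w = invCount (w * simpleTr j h) + 1 := by
    simpa [mul_assoc] using
      invCount_mul_simpleTr (u := w * simpleTr j h) (h := h) (by simpa [simpleTr])
  have hcover : RWCovers (w * simpleTr j h) w := ⟨j, h, by simp [mul_assoc], hlen⟩
  intro heq
  refine hminimal _ (hw.mul_simpleTr hdesc) (.single hcover) (fun h' => ?_)
    (by rwa [CrowdedPerm, heq])
  rw [h'] at hlen
  omega

theorem min_entry_lt_entry_add_two (hmin : MinimalCrowded w) (i : ℕ) :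
    min (entry w i) (entry w (i + 1)) < entry w (i + 2) := by
  by_contra! hle
  have hinj : ∀ {a b}, a ≠ b → entry w a ≠ entry w b := (entry_injective w).ne
  have h0 : entry w (i + 2) < entry w i :=
    (min_le_left _ _).trans' hle |>.lt_of_ne (hinj (by omega))
  have h1 : entry w (i + 2) < entry w (i + 1) :=
    (min_le_right _ _).trans' hle |>.lt_of_ne (hinj (by omega))
  have h : i + 2 < n := lt_of_entry_lt_entry (by omega) h1
  rcases (hinj (show i ≠ i + 1 by omega)).lt_or_gt with h01 | h10
  · exact hmin.rskP_mul_simpleTr_ne h h1 (hmin.1.rskP_mul_simpleTr_of_231 h h0 h01)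
  · exact h10.asymm (hmin.1.entry_lt_entry (by omega) (by omega) h1)

theorem entry_lt_max_entry_add_one (hmin : MinimalCrowded w) (i : ℕ) :
    entry w i < max (entry w (i + 1)) (entry w (i + 2)) := by
  by_contra! hle
  have hinj : ∀ {a b}, a ≠ b → entry w a ≠ entry w b := (entry_injective w).ne
  have h1 : entry w (i + 1) < entry w i :=
    (le_max_left _ _).trans hle |>.lt_of_ne (hinj (by omega))
  have h2 : entry w (i + 2) < entry w i :=
    (le_max_right _ _).trans hle |>.lt_of_ne (hinj (by omega))
  have h : i + 1 < n := lt_of_entry_lt_entry (by omega) h1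
  rcases (hinj (show i + 1 ≠ i + 2 by omega)).lt_or_gt with h12 | h21
  · exact hmin.rskP_mul_simpleTr_ne h h1 (hmin.1.rskP_mul_simpleTr_of_312 h h12 h2)
  · exact h1.asymm (hmin.1.entry_lt_entry (by omega) (by omega) h21)

end MinimalCrowded

namespace Equiv.Perm

variable {σ : Perm ℕ}

theorem apply_eq_self_of_lt_of_mem_lowerBounds {d : ℕ}
    (hd : d ∈ lowerBounds {j | σ (j + 1) < σ j})
    (hlast : ∀ i, min (σ i) (σ (i + 1)) < σ (i + 2)) {i : ℕ} (hi : i < d) : σ i = i := by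
  induction i using Nat.strong_induction_on with
  | _ i ih =>
  have hge : ∀ m, i ≤ m → i ≤ σ m := fun m hm => by
    by_contra! h
    have := σ.injective (ih _ h (by omega))
    omega
  by_contra hne
  obtain ⟨p, hp⟩ := σ.surjective i
  have hgt : ∀ m, i ≤ m → m ≠ p → i < σ m := fun m hm hmp =>
    (hge m hm).lt_of_ne fun h => hmp (σ.injective (h.symm.trans hp.symm))
  have hpi : i + 2 ≤ p := by
    have : i ≤ p := by
      by_contra! h
      have := ih p h (by omega)
      omega
    have : p ≠ i := by rintro rfl; exact hne hp
    have : p ≠ i + 1 := by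
      rintro rfl
      have := hd (show σ (i + 1) < σ i by rw [hp]; exact hgt i le_rfl (by omega))
      omega
    omega
  have h := hlast (p - 2)
  rw [show p - 2 + 1 = p - 1 by omega, show p - 2 + 2 = p by omega, hp] at h
  have := hgt (p - 2) (by omega) (by omega)
  have := hgt (p - 1) (by omega) (by omega)
  omega

theorem apply_eq_self_of_le_of_mem_upperBounds {n d' : ℕ} (hfix : ∀ k, n ≤ k → σ k = k)
    (hd' : d' ∈ upperBounds {j | σ (j + 1) < σ j})
    (hfirst : ∀ i, σ i < max (σ (i + 1)) (σ (i + 2))) {i : ℕ} (hi : d' + 2 ≤ i) :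
    σ i = i := by
  induction i using Nat.strong_decreasing_induction with
  | base => exact ⟨n, fun m hm _ => hfix m hm.le⟩
  | step i ih =>
  have hle : ∀ m, m ≤ i → σ m ≤ i := fun m hm => by
    by_contra! h
    have := σ.injective (ih _ h (by omega))
    omega
  by_contra hne
  obtain ⟨q, hq⟩ := σ.surjective i
  have hlt : ∀ m, m ≤ i → m ≠ q → σ m < i := fun m hm hmq =>
    (hle m hm).lt_of_ne fun h => hmq (σ.injective (h.trans hq.symm))
  have hqi : q < i := by
    have : q ≤ i := by
      by_contra! h
      have := ih q h (by omega)
      omega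
    have : q ≠ i := by rintro rfl; exact hne hq
    omega
  have hqd : q ≤ d' :=
    hd' (show σ (q + 1) < σ q by rw [hq]; exact hlt (q + 1) (by omega) (by omega))
  have h := hfirst q
  rw [hq] at h
  have := hlt (q + 1) (by omega) (by omega)
  have := hlt (q + 2) (by omega) (by omega)
  omega

end Equiv.Perm

/-- **Corollary.** A minimal crowded permutation with first descent `d` and last
descent `d'` fixes every position outside `[d, d'+1]` (0-indexed: every `i < d`
and every `i ≥ d'+2`). -/
theorem minimal_crowded_fixed_points {n : ℕ} (w : Equiv.Perm (Fin n))
    (hmin : MinimalCrowded w) (d d' : ℕ)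
    (hd : IsLeast {j : ℕ | entry w (j + 1) < entry w j} d)
    (hd' : IsGreatest {j : ℕ | entry w (j + 1) < entry w j} d') :
    ∀ i : ℕ, i < n → (i < d ∨ d' + 2 ≤ i) → entry w i = i := by
  have hσ := coe_extendDomain_equivSubtype w
  have hfix : ∀ k, n ≤ k → entry w k = k := fun _ => entry_of_le w
  rw [← hσ] at hd hd' hfix ⊢
  rintro i - (hi | hi)
  · exact Equiv.Perm.apply_eq_self_of_lt_of_mem_lowerBounds hd.2
      (by simpa only [hσ] using hmin.min_entry_lt_entry_add_two) hi
  · exact Equiv.Perm.apply_eq_self_of_le_of_mem_upperBounds hfix hd'.2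
      (by simpa only [hσ] using hmin.entry_lt_max_entry_add_one) hi
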